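/- arXiv:math/0506128 — 4 statements merged into one kernel-verified Lean document; each statement's English description precedes it below -/
import Mathlib

section
/- Let R be a commutative ring and let a, b, c, d, z ∈ R. For every integer N ≥ 1 one has Ψ_{2N}(a,b,c,d;z) = (1+b)·Ψ_{2N−1}(a,b,c,d;z) + (a^N b^N c^N d^{N−1} z² − b)·Ψ_{2N−2}(a,b,c,d;z), and Ψ_{2N+1}(a,b,c,d;z) = (1+a)·Ψ_{2N}(a,b,c,d;z) + (a^{N+1} b^N c^N d^N z² − a)·Ψ_{2N−1}(a,b,c,d;z). -/
open scoped BigOperators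

/-- A partition: a weakly decreasing sequence of nonnegative integers (0-indexed:
`parts i` is λ_{i+1}) with finitely many nonzero terms. -/
structure IntPartition where
  parts : ℕ → ℕ
  antitone : Antitone parts
  fin_support : ∃ N, ∀ n, N ≤ n → parts n = 0

namespace IntPartition

/-- Σ_{i≥1} ⌈λ_{2i-1}/2⌉ (odd-indexed rows, 1-based; ceiling). -/
noncomputable def statA (l : IntPartition) : ℕ := ∑ᶠ i : ℕ, (l.parts (2 * i) + 1) / 2
/-- Σ_{i≥1} ⌊λ_{2i-1}/2⌋. -/
noncomputable def statB (l : IntPartition) : ℕ := ∑ᶠ i : ℕ, l.parts (2 * i) / 2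
/-- Σ_{i≥1} ⌈λ_{2i}/2⌉. -/
noncomputable def statC (l : IntPartition) : ℕ := ∑ᶠ i : ℕ, (l.parts (2 * i + 1) + 1) / 2
/-- Σ_{i≥1} ⌊λ_{2i}/2⌋. -/
noncomputable def statD (l : IntPartition) : ℕ := ∑ᶠ i : ℕ, l.parts (2 * i + 1) / 2

/-- ℓ(λ): the number of nonzero parts. -/
noncomputable def length (l : IntPartition) : ℕ := Set.ncard (Function.support l.parts)

/-- |λ|: the sum of all parts. -/
noncomputable def size (l : IntPartition) : ℕ := ∑ᶠ i : ℕ, l.parts i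

/-- A partition is strict if its nonzero parts are pairwise distinct. -/
def Strict (l : IntPartition) : Prop := ∀ i, l.parts (i + 1) ≠ 0 → l.parts (i + 1) < l.parts i

/-- The Andrews–Stanley four-parameter weight ω(λ). -/
noncomputable def weight {R : Type*} [CommRing R] (a b c d : R) (l : IntPartition) : R :=
  a ^ l.statA * b ^ l.statB * c ^ l.statC * d ^ l.statD

/-- O(λ): the number of odd parts. -/
noncomputable def oddParts (l : IntPartition) : ℕ := Set.ncard {i : ℕ | Odd (l.parts i)}

/-- O(λ'): the number of odd parts of the conjugate partition. -/
noncomputable def conjOddParts (l : IntPartition) : ℕ :=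
  Set.ncard {j : ℕ | Odd (Set.ncard {i : ℕ | j + 1 ≤ l.parts i})}

end IntPartition

/-- The q-shifted factorial (x;q)_n. -/
def poch {R : Type*} [CommRing R] (x q : R) (n : ℕ) : R :=
  ∏ k ∈ Finset.range n, (1 - x * q ^ k)

/-- The infinite q-shifted factorial (x;q)_∞ (as an infinite product of reals). -/
noncomputable def pochInf (x q : ℝ) : ℝ := ∏' k : ℕ, (1 - x * q ^ k)

/-- The basic hypergeometric series ₂φ₁(α,β;γ;q,w). -/
noncomputable def phi21 (α β γ q w : ℝ) : ℝ :=
  ∑' n : ℕ, poch α q n * poch β q n / (poch q q n * poch γ q n) * w ^ n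

/-- Absolute convergence of the ₂φ₁ series. -/
def phi21Summable (α β γ q w : ℝ) : Prop :=
  Summable (fun n : ℕ => poch α q n * poch β q n / (poch q q n * poch γ q n) * w ^ n)

/-- The Gaussian binomial coefficient [N choose k]_q. -/
noncomputable def gauss {K : Type*} [Field K] (q : K) (N k : ℕ) : K :=
  poch q q N / (poch q q k * poch q q (N - k))

/-- Ψ_N(a,b,c,d;z): the generating function of strict partitions with parts ≤ N. -/
noncomputable def Psi {R : Type*} [CommRing R] (a b c d z : R) (N : ℕ) : R :=
  ∑ᶠ μ : {μ : IntPartition // μ.Strict ∧ μ.parts 0 ≤ N},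
    IntPartition.weight a b c d μ.1 * z ^ μ.1.length

namespace PsiAux
open IntPartition

lemma parts_ext {μ ν : IntPartition} (h : μ.parts = ν.parts) : μ = ν := by
  cases μ; cases ν; simpa using h

lemma parts_bound {μ : IntPartition} (hs : μ.Strict) {N : ℕ} (h0 : μ.parts 0 ≤ N) :
    ∀ i, μ.parts i ≠ 0 → μ.parts i + i ≤ N := by
  intro i
  induction i with
  | zero => intro _; simpa using h0
  | succ i ih =>
    intro h
    have h1 := hs i h
    have h2 : μ.parts i ≠ 0 := by omega
    have := ih h2
    omega

lemma parts_eq_zero {μ : IntPartition} (hs : μ.Strict) {N : ℕ} (h0 : μ.parts 0 ≤ N)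
    {n : ℕ} (hn : N ≤ n) : μ.parts n = 0 := by
  by_contra h
  have := parts_bound hs h0 n h
  omega

lemma supp_finite (μ : IntPartition) : (Function.support μ.parts).Finite := by
  obtain ⟨N, h⟩ := μ.fin_support
  apply Set.Finite.subset (Set.finite_Iio N)
  intro x hx
  simp only [Set.mem_Iio]
  by_contra hc
  exact hx (h x (by omega))

instance finiteSP (N : ℕ) : Finite {μ : IntPartition // μ.Strict ∧ μ.parts 0 ≤ N} := by
  have hinj : Function.Injective
      (fun μ : {μ : IntPartition // μ.Strict ∧ μ.parts 0 ≤ N} =>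
        (fun i : Fin N => (⟨μ.1.parts i, by
          have := μ.1.antitone (Nat.zero_le i.1)
          omega⟩ : Fin (N + 1)))) := by
    intro μ ν h
    apply Subtype.ext; apply parts_ext; funext i
    by_cases hi : i < N
    · have := congrFun h ⟨i, hi⟩
      simpa [Fin.mk.injEq] using this
    · rw [parts_eq_zero μ.2.1 μ.2.2 (show N ≤ i by omega),
        parts_eq_zero ν.2.1 ν.2.2 (show N ≤ i by omega)]
  exact Finite.of_injective _ hinj

lemma finsum_range {M : Type*} [AddCommMonoid M] (f : ℕ → M) (n : ℕ)
    (h : ∀ m, n ≤ m → f m = 0) : ∑ᶠ i, f i = ∑ i ∈ Finset.range n, f i := by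
  apply finsum_eq_sum_of_support_subset
  intro x hx
  simp only [Finset.coe_range, Set.mem_Iio]
  by_contra hc
  exact hx (h x (by omega))

/-- remove the first part -/
def shiftP (μ : IntPartition) : IntPartition where
  parts i := μ.parts (i + 1)
  antitone := fun i j hij => μ.antitone (by omega)
  fin_support := by
    obtain ⟨N, hN⟩ := μ.fin_support
    exact ⟨N, fun n hn => hN _ (by omega)⟩

/-- prepend a part of size `max N (μ.parts 0)` -/
def consP (N : ℕ) (μ : IntPartition) : IntPartition where
  parts i := if i = 0 then max N (μ.parts 0) else μ.parts (i - 1)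
  antitone := by
    intro i j hij
    rcases Nat.eq_zero_or_pos i with hi | hi
    · subst hi
      rcases Nat.eq_zero_or_pos j with hj | hj
      · subst hj; exact le_refl _
      · simp only [if_neg (by omega : j ≠ 0), if_pos rfl]
        exact le_max_of_le_right (μ.antitone (Nat.zero_le _))
    · have hj : j ≠ 0 := by omega
      simp only [if_neg (by omega : i ≠ 0), if_neg hj]
      exact μ.antitone (by omega)
  fin_support := by
    obtain ⟨N', hN'⟩ := μ.fin_support
    refine ⟨N' + 1, fun n hn => ?_⟩
    simp only [if_neg (by omega : n ≠ 0)]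
    exact hN' _ (by omega)

lemma shiftP_strict {μ : IntPartition} (hs : μ.Strict) : (shiftP μ).Strict :=
  fun i h => hs (i + 1) h

lemma consP_parts_zero {N : ℕ} {μ : IntPartition} (h0 : μ.parts 0 ≤ N) :
    (consP N μ).parts 0 = N := by
  simp [consP, Nat.max_eq_left h0]

lemma consP_parts_succ (N : ℕ) (μ : IntPartition) (i : ℕ) :
    (consP N μ).parts (i + 1) = μ.parts i := by
  simp [consP]

lemma consP_strict {N : ℕ} {μ : IntPartition} (hs : μ.Strict) (h0 : μ.parts 0 + 1 ≤ N) :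
    (consP N μ).Strict := by
  intro i h
  rcases Nat.eq_zero_or_pos i with hi | hi
  · subst hi
    rw [consP_parts_succ] at h ⊢
    rw [consP_parts_zero (by omega)]
    have := μ.antitone (Nat.zero_le 0)
    omega
  · obtain ⟨k, rfl⟩ : ∃ k, i = k + 1 := ⟨i - 1, by omega⟩
    rw [consP_parts_succ] at h ⊢
    rw [consP_parts_succ]
    exact hs k h

section stats
variable {M : ℕ} {μ : IntPartition} (hs : μ.Strict) (h0 : μ.parts 0 ≤ M)

include hs h0

lemma parts_zero_of_ge {n : ℕ} (hn : M ≤ n) : μ.parts n = 0 := parts_eq_zero hs h0 hn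

lemma statA_cons : (consP (M + 1) μ).statA = (M + 2) / 2 + μ.statC := by
  rw [statA, statC]
  rw [finsum_range _ (M + 2) ?hb1, finsum_range _ (M + 1) ?hb2]
  case hb1 =>
    intro m hm
    have h1 : 2 * m ≠ 0 := by omega
    simp only [consP, if_neg h1]
    rw [parts_eq_zero hs h0 (show M ≤ 2 * m - 1 by omega)]
    rfl
  case hb2 =>
    intro m hm
    rw [parts_eq_zero hs h0 (show M ≤ 2 * m + 1 by omega)]
    rfl
  rw [Finset.sum_range_succ']
  rw [Nat.add_comm]
  congr 1
  · show ((consP (M + 1) μ).parts (2 * 0) + 1) / 2 = (M + 2) / 2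
    rw [show 2 * 0 = 0 from rfl, consP_parts_zero (show μ.parts 0 ≤ M + 1 by omega)]

lemma statB_cons : (consP (M + 1) μ).statB = (M + 1) / 2 + μ.statD := by
  rw [statB, statD]
  rw [finsum_range _ (M + 2) ?hb1, finsum_range _ (M + 1) ?hb2]
  case hb1 =>
    intro m hm
    have h1 : 2 * m ≠ 0 := by omega
    simp only [consP, if_neg h1]
    rw [parts_eq_zero hs h0 (show M ≤ 2 * m - 1 by omega)]
    rfl
  case hb2 =>
    intro m hm
    rw [parts_eq_zero hs h0 (show M ≤ 2 * m + 1 by omega)]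
    rfl
  rw [Finset.sum_range_succ']
  rw [Nat.add_comm]
  congr 1
  · show (consP (M + 1) μ).parts (2 * 0) / 2 = (M + 1) / 2
    rw [show 2 * 0 = 0 from rfl, consP_parts_zero (show μ.parts 0 ≤ M + 1 by omega)]

lemma statC_cons : (consP (M + 1) μ).statC = μ.statA := by
  rw [statC, statA]
  apply finsum_congr
  intro i
  have h1 : 2 * i + 1 ≠ 0 := by omega
  simp only [consP, if_neg h1, Nat.add_sub_cancel]

lemma statD_cons : (consP (M + 1) μ).statD = μ.statB := by
  rw [statD, statB]
  apply finsum_congr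
  intro i
  have h1 : 2 * i + 1 ≠ 0 := by omega
  simp only [consP, if_neg h1, Nat.add_sub_cancel]

lemma length_cons : (consP (M + 1) μ).length = μ.length + 1 := by
  have hsupp : Function.support (consP (M + 1) μ).parts =
      insert 0 ((fun n => n + 1) '' Function.support μ.parts) := by
    ext n
    rcases Nat.eq_zero_or_pos n with hn | hn
    · subst hn
      simp only [Function.mem_support, Set.mem_insert_iff, true_or, iff_true]
      rw [consP_parts_zero (by omega)]
      omega
    · obtain ⟨k, rfl⟩ : ∃ k, n = k + 1 := ⟨n - 1, by omega⟩
      simp only [Function.mem_support, Set.mem_insert_iff, Set.mem_image]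
      rw [consP_parts_succ]
      constructor
      · intro h; exact Or.inr ⟨k, h, rfl⟩
      · rintro (h | ⟨m, hm, hmk⟩)
        · omega
        · have : m = k := by omega
          subst this; exact hm
  rw [length, length, hsupp]
  rw [Set.ncard_insert_of_notMem (by simp) ((supp_finite μ).image _)]
  rw [Set.ncard_image_of_injective _ (fun x y h => by omega)]

end stats

lemma weight_cons {R : Type*} [CommRing R] (a b c d : R) {M : ℕ} {μ : IntPartition}
    (hs : μ.Strict) (h0 : μ.parts 0 ≤ M) :
    weight a b c d (consP (M + 1) μ) = a ^ ((M + 2) / 2) * b ^ ((M + 1) / 2) *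
      weight c d a b μ := by
  rw [weight, weight, statA_cons hs h0, statB_cons hs h0, statC_cons hs h0, statD_cons hs h0,
    pow_add, pow_add]
  ring

/-- the splitting equivalence -/
noncomputable def spEquiv (M : ℕ) :
    {μ : IntPartition // μ.Strict ∧ μ.parts 0 ≤ M + 1} ≃
      ({μ : IntPartition // μ.Strict ∧ μ.parts 0 ≤ M} ⊕
       {μ : IntPartition // μ.Strict ∧ μ.parts 0 ≤ M}) where
  toFun μ :=
    if h : μ.1.parts 0 ≤ M then Sum.inl ⟨μ.1, μ.2.1, h⟩
    else Sum.inr ⟨shiftP μ.1, shiftP_strict μ.2.1, by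
      show μ.1.parts 1 ≤ M
      by_cases h1 : μ.1.parts 1 = 0
      · omega
      · have hlt : μ.1.parts 1 < μ.1.parts 0 := μ.2.1 0 h1
        have := μ.2.2
        omega⟩
  invFun x :=
    match x with
    | Sum.inl μ => ⟨μ.1, μ.2.1, by have := μ.2.2; omega⟩
    | Sum.inr μ => ⟨consP (M + 1) μ.1, consP_strict μ.2.1 (by have := μ.2.2; omega),
        le_of_eq (consP_parts_zero (by have := μ.2.2; omega))⟩
  left_inv := by
    intro μ
    by_cases h : μ.1.parts 0 ≤ M
    · simp only [dif_pos h]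
    · simp only [dif_neg h]
      apply Subtype.ext
      apply parts_ext
      funext n
      rcases Nat.eq_zero_or_pos n with hn | hn
      · subst hn
        have h1 : μ.1.parts 1 ≤ M := by
          by_cases h1 : μ.1.parts 1 = 0
          · omega
          · have hlt : μ.1.parts 1 < μ.1.parts 0 := μ.2.1 0 h1
            have := μ.2.2; omega
        show (consP (M + 1) (shiftP μ.1)).parts 0 = μ.1.parts 0
        rw [consP_parts_zero (show (shiftP μ.1).parts 0 ≤ M + 1 by
          show μ.1.parts 1 ≤ M + 1; omega)]
        have := μ.2.2
        omega
      · obtain ⟨k, rfl⟩ : ∃ k, n = k + 1 := ⟨n - 1, by omega⟩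
        show (consP (M + 1) (shiftP μ.1)).parts (k + 1) = μ.1.parts (k + 1)
        rw [consP_parts_succ]
        rfl
  right_inv := by
    intro x
    match x with
    | Sum.inl μ =>
      simp only [dif_pos μ.2.2]
    | Sum.inr μ =>
      have hnot : ¬ (consP (M + 1) μ.1).parts 0 ≤ M := by
        rw [consP_parts_zero (by have := μ.2.2; omega)]
        omega
      simp only [dif_neg hnot]
      refine congrArg Sum.inr (Subtype.ext (parts_ext (funext fun n => ?_)))
      exact consP_parts_succ (M + 1) μ.1 n

lemma psi_step {R : Type*} [CommRing R] (a b c d z : R) (M : ℕ) :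
    Psi a b c d z (M + 1) = Psi a b c d z M +
      a ^ ((M + 2) / 2) * b ^ ((M + 1) / 2) * z * Psi c d a b z M := by
  haveI : Fintype {μ : IntPartition // μ.Strict ∧ μ.parts 0 ≤ M + 1} := Fintype.ofFinite _
  haveI : Fintype {μ : IntPartition // μ.Strict ∧ μ.parts 0 ≤ M} := Fintype.ofFinite _
  rw [Psi, Psi, Psi, finsum_eq_sum_of_fintype, finsum_eq_sum_of_fintype,
    finsum_eq_sum_of_fintype]
  rw [← (spEquiv M).symm.sum_comp
    (fun μ : {μ : IntPartition // μ.Strict ∧ μ.parts 0 ≤ M + 1} =>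
      weight a b c d μ.1 * z ^ μ.1.length)]
  rw [Fintype.sum_sum_type]
  congr 1
  rw [Finset.mul_sum]
  apply Finset.sum_congr rfl
  intro μ _
  show weight a b c d (consP (M + 1) μ.1) * z ^ (consP (M + 1) μ.1).length = _
  rw [weight_cons a b c d μ.2.1 μ.2.2, length_cons μ.2.1 μ.2.2, pow_succ]
  ring

end PsiAux

theorem psi_recurrence {R : Type*} [CommRing R] (a b c d z : R) (N : ℕ) (hN : 1 ≤ N) :
    Psi a b c d z (2 * N) =
        (1 + b) * Psi a b c d z (2 * N - 1) +
          (a ^ N * b ^ N * c ^ N * d ^ (N - 1) * z ^ 2 - b) * Psi a b c d z (2 * N - 2) ∧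
    Psi a b c d z (2 * N + 1) =
        (1 + a) * Psi a b c d z (2 * N) +
          (a ^ (N + 1) * b ^ N * c ^ N * d ^ N * z ^ 2 - a) * Psi a b c d z (2 * N - 1) := by
  obtain ⟨M, rfl⟩ : ∃ M, N = M + 1 := ⟨N - 1, by omega⟩
  have i1 : 2 * (M + 1) = 2 * M + 2 := by omega
  have i2 : 2 * (M + 1) - 1 = 2 * M + 1 := by omega
  have i3 : 2 * (M + 1) - 2 = 2 * M := by omega
  have i4 : 2 * (M + 1) + 1 = 2 * M + 3 := by omega
  have i5 : M + 1 - 1 = M := by omega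
  rw [i2, i3, i4, i5, i1]
  have e1 := PsiAux.psi_step a b c d z (2 * M + 1)
  have e2 := PsiAux.psi_step a b c d z (2 * M)
  have e3 := PsiAux.psi_step c d a b z (2 * M)
  have e4 := PsiAux.psi_step a b c d z (2 * M + 2)
  have e5 := PsiAux.psi_step c d a b z (2 * M + 1)
  rw [show (2 * M + 1 + 2) / 2 = M + 1 by omega, show (2 * M + 1 + 1) / 2 = M + 1 by omega] at e1
  rw [show (2 * M + 2) / 2 = M + 1 by omega, show (2 * M + 1) / 2 = M by omega] at e2 e3
  rw [show (2 * M + 2 + 2) / 2 = M + 2 by omega, show (2 * M + 2 + 1) / 2 = M + 1 by omega] at e4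
  rw [show (2 * M + 1 + 2) / 2 = M + 1 by omega, show (2 * M + 1 + 1) / 2 = M + 1 by omega] at e5
  rw [show 2 * M + 1 + 1 = 2 * M + 2 by omega] at e1 e5
  rw [show 2 * M + 2 + 1 = 2 * M + 3 by omega] at e4
  rw [show 2 * M + 2 + 1 = 2 * M + 3 by omega] at e4
  constructor
  · linear_combination e1 + (a ^ (M + 1) * b ^ (M + 1) * z) * e3 - b * e2
  · linear_combination e4 + (a ^ (M + 2) * b ^ (M + 1) * z) * e5 - a * e1
end

section
/- Let R be a commutative ring, let a, b, c, d, z ∈ R, and set q = abcd, X_N = Ψ_{2N}(a,b,c,d;z), Y_N = Ψ_{2N+1}(a,b,c,d;z). Then for every integer N ≥ 1: X_{N+1} = (1 + ab + a(1+bc)z²q^N)·X_N − ab(1 − z²q^N)(1 − acz²q^{N−1})·X_{N−1}, and Y_{N+1} = (1 + ab + abc(1+ad)z²q^N)·Y_N − ab(1 − z²q^N)(1 − acz²q^N)·Y_{N−1}. -/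
open scoped BigOperators

section AndrewsStanleyAux

namespace IntPartition

lemma parts_ext {μ ν : IntPartition} (h : μ.parts = ν.parts) : μ = ν := by
  cases μ; cases ν; simpa using h

lemma strict_bound {μ : IntPartition} (h : μ.Strict) :
    ∀ i, μ.parts i ≠ 0 → μ.parts i + i ≤ μ.parts 0 := by
  intro i
  induction i with
  | zero => intro _; omega
  | succ j ih =>
    intro hi
    have h1 : μ.parts (j + 1) < μ.parts j := h j hi
    have h2 : μ.parts j ≠ 0 := by omega
    have := ih h2
    omega

lemma parts_zero_of_le {μ : IntPartition} (h : μ.Strict) {n i : ℕ}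
    (hn : μ.parts 0 ≤ n) (hi : n ≤ i) : μ.parts i = 0 := by
  by_contra hne
  have := strict_bound h i hne
  omega

lemma support_finite (μ : IntPartition) : (Function.support μ.parts).Finite := by
  obtain ⟨M, hM⟩ := μ.fin_support
  apply Set.Finite.subset (Set.finite_Iio M)
  intro i hi
  simp only [Function.mem_support] at hi
  simp only [Set.mem_Iio]
  by_contra hc
  exact hi (hM i (by omega))

/-- The set of strict partitions with all parts at most `n`. -/
def PS (n : ℕ) : Set IntPartition := {μ | μ.Strict ∧ μ.parts 0 ≤ n}

lemma PS_finite (n : ℕ) : (PS n).Finite := by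
  have hinj : Set.InjOn (fun μ : IntPartition => fun i : Fin (n + 1) => μ.parts i) (PS n) := by
    rintro μ ⟨hμs, hμn⟩ ν ⟨hνs, hνn⟩ h
    apply parts_ext
    funext i
    by_cases hi : i < n + 1
    · exact congrFun h ⟨i, hi⟩
    · rw [parts_zero_of_le hμs hμn (by omega), parts_zero_of_le hνs hνn (by omega)]
  apply Set.Finite.of_finite_image ?_ hinj
  apply Set.Finite.subset (Set.Finite.pi fun _ : Fin (n + 1) => Set.finite_Iic n)
  rintro g ⟨μ, hμ, rfl⟩
  rw [Set.mem_pi]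
  intro i _
  exact Set.mem_Iic.2 (le_trans (μ.antitone (Nat.zero_le _)) hμ.2)

end IntPartition

end AndrewsStanleyAux
namespace IntPartition

/-- Prepend a part to a partition (using `max` to stay well-defined in general). -/
def pcons (m : ℕ) (μ : IntPartition) : IntPartition where
  parts := fun i => match i with
    | 0 => max m (μ.parts 0)
    | j + 1 => μ.parts j
  antitone := by
    apply antitone_nat_of_succ_le
    rintro (_ | j)
    · exact le_max_right _ _
    · exact μ.antitone (Nat.le_succ j)
  fin_support := by
    obtain ⟨M, hM⟩ := μ.fin_support
    refine ⟨M + 1, ?_⟩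
    rintro (_ | j) hj
    · exact absurd hj (by omega)
    · exact hM j (by omega)

@[simp] lemma pcons_parts_zero (m : ℕ) (μ : IntPartition) :
    (pcons m μ).parts 0 = max m (μ.parts 0) := rfl

@[simp] lemma pcons_parts_succ (m : ℕ) (μ : IntPartition) (j : ℕ) :
    (pcons m μ).parts (j + 1) = μ.parts j := rfl

/-- Remove the first part of a partition. -/
def ptail (μ : IntPartition) : IntPartition where
  parts := fun i => μ.parts (i + 1)
  antitone := fun _ _ h => μ.antitone (Nat.succ_le_succ h)
  fin_support := by
    obtain ⟨M, hM⟩ := μ.fin_support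
    exact ⟨M, fun i hi => hM (i + 1) (by omega)⟩

lemma nat_finsum_eq_range (f : ℕ → ℕ) (M : ℕ) (h : ∀ i, M ≤ i → f i = 0) :
    ∑ᶠ i, f i = ∑ i ∈ Finset.range M, f i := by
  apply finsum_eq_sum_of_support_subset
  intro i hi
  simp only [Function.mem_support] at hi
  simp only [Finset.coe_range, Set.mem_Iio]
  by_contra hc
  exact hi (h i (by omega))

lemma statA_pcons {n : ℕ} {μ : IntPartition} (h : μ.parts 0 ≤ n) :
    (pcons (n + 1) μ).statA = (n + 2) / 2 + μ.statC := by
  obtain ⟨M, hM⟩ := μ.fin_support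
  have h1 : ∑ᶠ i : ℕ, ((pcons (n + 1) μ).parts (2 * i) + 1) / 2
      = ∑ i ∈ Finset.range (M + 1), ((pcons (n + 1) μ).parts (2 * i) + 1) / 2 := by
    apply nat_finsum_eq_range
    intro i hi
    obtain ⟨j, rfl⟩ : ∃ j, i = j + 1 := ⟨i - 1, by omega⟩
    rw [show 2 * (j + 1) = (2 * j + 1) + 1 from by ring, pcons_parts_succ, hM _ (by omega)]
  rw [statA, h1, Finset.sum_range_succ']
  have h0 : ((pcons (n + 1) μ).parts (2 * 0) + 1) / 2 = (n + 2) / 2 := by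
    rw [show 2 * 0 = 0 from rfl, pcons_parts_zero, max_eq_left (by omega : μ.parts 0 ≤ n + 1)]
  rw [h0]
  have h2 : ∀ i ∈ Finset.range M, ((pcons (n + 1) μ).parts (2 * (i + 1)) + 1) / 2
      = (μ.parts (2 * i + 1) + 1) / 2 := by
    intro i _
    rw [show 2 * (i + 1) = (2 * i + 1) + 1 from by ring, pcons_parts_succ]
  rw [Finset.sum_congr rfl h2, statC,
    nat_finsum_eq_range _ M (fun i hi => by rw [hM _ (by omega)])]
  exact Nat.add_comm _ _

lemma statB_pcons {n : ℕ} {μ : IntPartition} (h : μ.parts 0 ≤ n) :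
    (pcons (n + 1) μ).statB = (n + 1) / 2 + μ.statD := by
  obtain ⟨M, hM⟩ := μ.fin_support
  have h1 : ∑ᶠ i : ℕ, (pcons (n + 1) μ).parts (2 * i) / 2
      = ∑ i ∈ Finset.range (M + 1), (pcons (n + 1) μ).parts (2 * i) / 2 := by
    apply nat_finsum_eq_range
    intro i hi
    obtain ⟨j, rfl⟩ : ∃ j, i = j + 1 := ⟨i - 1, by omega⟩
    rw [show 2 * (j + 1) = (2 * j + 1) + 1 from by ring, pcons_parts_succ, hM _ (by omega)]
  rw [statB, h1, Finset.sum_range_succ']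
  have h0 : (pcons (n + 1) μ).parts (2 * 0) / 2 = (n + 1) / 2 := by
    rw [show 2 * 0 = 0 from rfl, pcons_parts_zero, max_eq_left (by omega : μ.parts 0 ≤ n + 1)]
  rw [h0]
  have h2 : ∀ i ∈ Finset.range M, (pcons (n + 1) μ).parts (2 * (i + 1)) / 2
      = μ.parts (2 * i + 1) / 2 := by
    intro i _
    rw [show 2 * (i + 1) = (2 * i + 1) + 1 from by ring, pcons_parts_succ]
  rw [Finset.sum_congr rfl h2, statD,
    nat_finsum_eq_range _ M (fun i hi => by rw [hM _ (by omega)])]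
  exact Nat.add_comm _ _

lemma statC_pcons (m : ℕ) (μ : IntPartition) : (pcons m μ).statC = μ.statA := by
  rw [statC, statA]
  exact finsum_congr fun i => by rw [pcons_parts_succ]

lemma statD_pcons (m : ℕ) (μ : IntPartition) : (pcons m μ).statD = μ.statB := by
  rw [statD, statB]
  exact finsum_congr fun i => by rw [pcons_parts_succ]

lemma length_pcons (n : ℕ) (μ : IntPartition) :
    (pcons (n + 1) μ).length = μ.length + 1 := by
  have hsupp : Function.support (pcons (n + 1) μ).parts
      = insert 0 ((· + 1) '' Function.support μ.parts) := by
    ext i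
    cases i with
    | zero =>
      simp only [Function.mem_support, pcons_parts_zero, Set.mem_insert_iff]
      constructor
      · intro _; left; trivial
      · intro _; omega
    | succ j =>
      simp only [Function.mem_support, pcons_parts_succ, Set.mem_insert_iff, Set.mem_image]
      constructor
      · intro hj; exact Or.inr ⟨j, hj, rfl⟩
      · rintro (hj | ⟨k, hk, hke⟩)
        · exact absurd hj (by omega)
        · have : k = j := by omega
          rwa [← this]
  rw [length, length, hsupp,
    Set.ncard_insert_of_notMem (by rintro ⟨k, -, hk⟩; simp at hk)
      ((μ.support_finite).image _),
    Set.ncard_image_of_injective _ (add_left_injective 1)]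

lemma weight_pcons {R : Type*} [CommRing R] (a b c d : R) {n : ℕ} {μ : IntPartition}
    (h : μ.parts 0 ≤ n) :
    weight a b c d (pcons (n + 1) μ)
      = a ^ ((n + 2) / 2) * b ^ ((n + 1) / 2) * weight c d a b μ := by
  rw [weight, weight, statA_pcons h, statB_pcons h, statC_pcons, statD_pcons, pow_add, pow_add]
  ring

end IntPartition
namespace IntPartition

lemma pcons_bijOn (n : ℕ) :
    Set.BijOn (pcons (n + 1)) (PS n) {μ : IntPartition | μ.Strict ∧ μ.parts 0 = n + 1} := by
  refine ⟨?_, ?_, ?_⟩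
  · rintro μ ⟨hs, hle⟩
    refine ⟨?_, ?_⟩
    · intro i hi
      cases i with
      | zero =>
        have hi' : μ.parts 0 ≠ 0 := hi
        show μ.parts 0 < max (n + 1) (μ.parts 0)
        omega
      | succ j => exact hs j hi
    · show max (n + 1) (μ.parts 0) = n + 1
      omega
  · intro μ hμ ν hν h
    apply parts_ext; funext i
    have := congrArg (fun ρ => ρ.parts (i + 1)) h
    simpa using this
  · rintro ν ⟨hs, h0⟩
    have htail : ptail ν ∈ PS n := by
      constructor
      · intro i hi; exact hs (i + 1) hi
      · show ν.parts 1 ≤ n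
        by_cases h1 : ν.parts 1 = 0
        · omega
        · have h2 : ν.parts 1 < ν.parts 0 := hs 0 h1
          omega
    refine ⟨ptail ν, htail, ?_⟩
    apply parts_ext; funext i
    cases i with
    | zero =>
      show max (n + 1) (ν.parts 1) = ν.parts 0
      have := ν.antitone (by omega : (0 : ℕ) ≤ 1)
      omega
    | succ j => rfl

lemma Psi_eq_finsum_mem {R : Type*} [CommRing R] (a b c d z : R) (N : ℕ) :
    Psi a b c d z N = ∑ᶠ μ ∈ PS N, weight a b c d μ * z ^ μ.length := by
  rw [← finsum_set_coe_eq_finsum_mem (PS N)]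
  rfl

lemma Psi_succ {R : Type*} [CommRing R] (a b c d z : R) (n : ℕ) :
    Psi a b c d z (n + 1)
      = Psi a b c d z n + a ^ ((n + 2) / 2) * b ^ ((n + 1) / 2) * z * Psi c d a b z n := by
  have hPS : PS (n + 1) = PS n ∪ {μ : IntPartition | μ.Strict ∧ μ.parts 0 = n + 1} := by
    ext μ
    simp only [PS, Set.mem_setOf_eq, Set.mem_union]
    constructor
    · rintro ⟨hs, h⟩
      rcases Nat.lt_or_ge (μ.parts 0) (n + 1) with h' | h'
      · exact Or.inl ⟨hs, by omega⟩
      · exact Or.inr ⟨hs, by omega⟩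
    · rintro (⟨hs, h⟩ | ⟨hs, h⟩) <;> exact ⟨hs, by omega⟩
  have hdisj : Disjoint (PS n) {μ : IntPartition | μ.Strict ∧ μ.parts 0 = n + 1} := by
    rw [Set.disjoint_left]
    rintro μ ⟨_, h1⟩ ⟨_, h2⟩
    omega
  have hTfin : ({μ : IntPartition | μ.Strict ∧ μ.parts 0 = n + 1} : Set IntPartition).Finite := by
    apply (PS_finite (n + 1)).subset
    rintro μ ⟨hs, h⟩; exact ⟨hs, by omega⟩
  have key : ∀ μ ∈ PS n,
      a ^ ((n + 2) / 2) * b ^ ((n + 1) / 2) * z * (weight c d a b μ * z ^ μ.length)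
        = weight a b c d (pcons (n + 1) μ) * z ^ (pcons (n + 1) μ).length := by
    rintro μ ⟨hs, h⟩
    rw [weight_pcons a b c d h, length_pcons, pow_succ]
    ring
  have hT : ∑ᶠ μ ∈ {μ : IntPartition | μ.Strict ∧ μ.parts 0 = n + 1},
        weight a b c d μ * z ^ μ.length
      = a ^ ((n + 2) / 2) * b ^ ((n + 1) / 2) * z * Psi c d a b z n := by
    rw [← finsum_mem_eq_of_bijOn (pcons (n + 1)) (pcons_bijOn n) key,
      Psi_eq_finsum_mem, finsum_mem_eq_finite_toFinset_sum _ (PS_finite n),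
      finsum_mem_eq_finite_toFinset_sum _ (PS_finite n), Finset.mul_sum]
  rw [Psi_eq_finsum_mem, hPS, finsum_mem_union hdisj (PS_finite n) hTfin,
    ← Psi_eq_finsum_mem, hT]

end IntPartition
theorem psi_assoc_alSalamChihara_recurrence {R : Type*} [CommRing R] (a b c d z q : R)
    (hq : q = a * b * c * d) (X Y : ℕ → R)
    (hX : ∀ n, X n = Psi a b c d z (2 * n)) (hY : ∀ n, Y n = Psi a b c d z (2 * n + 1))
    (N : ℕ) (hN : 1 ≤ N) :
    X (N + 1) =
        (1 + a * b + a * (1 + b * c) * z ^ 2 * q ^ N) * X N -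
          a * b * (1 - z ^ 2 * q ^ N) * (1 - a * c * z ^ 2 * q ^ (N - 1)) * X (N - 1) ∧
    Y (N + 1) =
        (1 + a * b + a * b * c * (1 + a * d) * z ^ 2 * q ^ N) * Y N -
          a * b * (1 - z ^ 2 * q ^ N) * (1 - a * c * z ^ 2 * q ^ N) * Y (N - 1) := by
  obtain ⟨M, rfl⟩ : ∃ M, N = M + 1 := ⟨N - 1, by omega⟩
  have eP0 : Psi a b c d z (2 * M + 1)
      = Psi a b c d z (2 * M) + a ^ (M + 1) * b ^ M * z * Psi c d a b z (2 * M) := by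
    have h := IntPartition.Psi_succ a b c d z (2 * M)
    rwa [show (2 * M + 2) / 2 = M + 1 from by omega,
      show (2 * M + 1) / 2 = M from by omega] at h
  have eQ0 : Psi c d a b z (2 * M + 1)
      = Psi c d a b z (2 * M) + c ^ (M + 1) * d ^ M * z * Psi a b c d z (2 * M) := by
    have h := IntPartition.Psi_succ c d a b z (2 * M)
    rwa [show (2 * M + 2) / 2 = M + 1 from by omega,
      show (2 * M + 1) / 2 = M from by omega] at h
  have eP1 : Psi a b c d z (2 * M + 2)
      = Psi a b c d z (2 * M + 1) + a ^ (M + 1) * b ^ (M + 1) * z * Psi c d a b z (2 * M + 1) := by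
    have h := IntPartition.Psi_succ a b c d z (2 * M + 1)
    rwa [show (2 * M + 1 + 2) / 2 = M + 1 from by omega,
      show (2 * M + 1 + 1) / 2 = M + 1 from by omega,
      show 2 * M + 1 + 1 = 2 * M + 2 from by omega] at h
  have eQ1 : Psi c d a b z (2 * M + 2)
      = Psi c d a b z (2 * M + 1) + c ^ (M + 1) * d ^ (M + 1) * z * Psi a b c d z (2 * M + 1) := by
    have h := IntPartition.Psi_succ c d a b z (2 * M + 1)
    rwa [show (2 * M + 1 + 2) / 2 = M + 1 from by omega,
      show (2 * M + 1 + 1) / 2 = M + 1 from by omega,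
      show 2 * M + 1 + 1 = 2 * M + 2 from by omega] at h
  have eP2 : Psi a b c d z (2 * M + 3)
      = Psi a b c d z (2 * M + 2) + a ^ (M + 2) * b ^ (M + 1) * z * Psi c d a b z (2 * M + 2) := by
    have h := IntPartition.Psi_succ a b c d z (2 * M + 2)
    rwa [show (2 * M + 2 + 2) / 2 = M + 2 from by omega,
      show (2 * M + 2 + 1) / 2 = M + 1 from by omega,
      show 2 * M + 2 + 1 = 2 * M + 3 from by omega] at h
  have eQ2 : Psi c d a b z (2 * M + 3)
      = Psi c d a b z (2 * M + 2) + c ^ (M + 2) * d ^ (M + 1) * z * Psi a b c d z (2 * M + 2) := by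
    have h := IntPartition.Psi_succ c d a b z (2 * M + 2)
    rwa [show (2 * M + 2 + 2) / 2 = M + 2 from by omega,
      show (2 * M + 2 + 1) / 2 = M + 1 from by omega,
      show 2 * M + 2 + 1 = 2 * M + 3 from by omega] at h
  have eP3 : Psi a b c d z (2 * M + 4)
      = Psi a b c d z (2 * M + 3) + a ^ (M + 2) * b ^ (M + 2) * z * Psi c d a b z (2 * M + 3) := by
    have h := IntPartition.Psi_succ a b c d z (2 * M + 3)
    rwa [show (2 * M + 3 + 2) / 2 = M + 2 from by omega,
      show (2 * M + 3 + 1) / 2 = M + 2 from by omega,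
      show 2 * M + 3 + 1 = 2 * M + 4 from by omega] at h
  have eQ3 : Psi c d a b z (2 * M + 4)
      = Psi c d a b z (2 * M + 3) + c ^ (M + 2) * d ^ (M + 2) * z * Psi a b c d z (2 * M + 3) := by
    have h := IntPartition.Psi_succ c d a b z (2 * M + 3)
    rwa [show (2 * M + 3 + 2) / 2 = M + 2 from by omega,
      show (2 * M + 3 + 1) / 2 = M + 2 from by omega,
      show 2 * M + 3 + 1 = 2 * M + 4 from by omega] at h
  have eP4 : Psi a b c d z (2 * M + 5)
      = Psi a b c d z (2 * M + 4) + a ^ (M + 3) * b ^ (M + 2) * z * Psi c d a b z (2 * M + 4) := by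
    have h := IntPartition.Psi_succ a b c d z (2 * M + 4)
    rwa [show (2 * M + 4 + 2) / 2 = M + 3 from by omega,
      show (2 * M + 4 + 1) / 2 = M + 2 from by omega,
      show 2 * M + 4 + 1 = 2 * M + 5 from by omega] at h
  rw [hq, show M + 1 - 1 = M from by omega]
  constructor
  · rw [hX (M + 1 + 1), hX (M + 1), hX M,
      show 2 * (M + 1 + 1) = 2 * M + 4 from by omega,
      show 2 * (M + 1) = 2 * M + 2 from by omega]
    rw [eP3, eP2, eQ2, eP1, eQ1, eP0, eQ0]
    ring
  · rw [hY (M + 1 + 1), hY (M + 1), hY M,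
      show 2 * (M + 1 + 1) + 1 = 2 * M + 5 from by omega,
      show 2 * (M + 1) + 1 = 2 * M + 3 from by omega]
    rw [eP4, eP3, eQ3, eP2, eQ2, eP1, eQ1, eP0, eQ0]
    ring
end

section
/- Let K be a field, let a,b,c,d ∈ K, set q = abcd, and assume 1 − q^j ≠ 0 for all 1 ≤ j ≤ N. Then Ψ_{2N}(a,b,c,d;1) = Σ_{k=0}^{N} [N choose k]_q · (−a;q)_k · (−c;q)_{N−k} · (ab)^{N−k}. -/
open scoped BigOperators

/-!
Sorting decreasingly identifies the subsets of `{1, …, M}` with the strict partitions whose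
parts are at most `M`. Adding `M + 1` as a new largest part moves every other part to a row of
the opposite parity, which exchanges `(a, b)` with `(c, d)`:
`Ψ_{M+1}(a,b,c,d;z) = Ψ_M(a,b,c,d;z) + z a^⌈(M+1)/2⌉ b^⌊(M+1)/2⌋ Ψ_M(c,d,a,b;z)`.
The claimed closed form for `Ψ_{2N}`, together with the same sum with `(-a;q)_{k+1}` in place of
`(-a;q)_k` for `Ψ_{2N+1}`, satisfies this recursion when `q = abcd`: the step from `2N + 1` to
`2N + 2` is the `q`-Pascal rule, and both steps use the symmetry `[N, k]_q = [N, N - k]_q` to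
compare the `(a, b, c, d)` and `(c, d, a, b)` sums term by term.
-/

open Finset

lemma finsum_eq_zero_add_finsum_succ {M : Type*} [AddCommMonoid M] {f : ℕ → M}
    (hf : (Function.support f).Finite) : ∑ᶠ i, f i = f 0 + ∑ᶠ i, f (i + 1) := by
  obtain ⟨n, hn⟩ := hf.bddAbove
  have hsupp : Function.support f ⊆ ↑(range (n + 1)) := fun i hi => by
    simpa [Nat.lt_succ_iff] using hn hi
  have hsupp' : Function.support (fun i => f (i + 1)) ⊆ ↑(range n) := fun i hi => by
    have := hn hi
    simp only [coe_range, Set.mem_Iio]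
    omega
  rw [finsum_eq_sum_of_support_subset f hsupp, finsum_eq_sum_of_support_subset _ hsupp',
    sum_range_succ', add_comm]

namespace IntPartition

lemma parts_injective : Function.Injective IntPartition.parts := by
  rintro ⟨_, _, _⟩ ⟨_, _, _⟩ h
  cases h
  rfl

lemma finite_support_comp_parts (μ : IntPartition) {g e : ℕ → ℕ} (hg : g 0 = 0)
    (he : ∀ i, i ≤ e i) : (Function.support fun i => g (μ.parts (e i))).Finite := by
  obtain ⟨N, hN⟩ := μ.fin_support
  refine (Set.finite_Iio N).subset fun i hi => ?_
  by_contra hiN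
  exact hi (show g (μ.parts (e i)) = 0 by rw [hN _ ((not_lt.mp hiN).trans (he i)), hg])

def tail (μ : IntPartition) : IntPartition where
  parts i := μ.parts (i + 1)
  antitone := μ.antitone.comp_monotone fun _ _ h => Nat.succ_le_succ h
  fin_support := μ.fin_support.imp fun _ hN n hn => hN (n + 1) (by omega)

lemma statA_eq_add_statC_tail (μ : IntPartition) :
    μ.statA = (μ.parts 0 + 1) / 2 + μ.tail.statC := by
  rw [statA, finsum_eq_zero_add_finsum_succ
    (μ.finite_support_comp_parts (g := fun n => (n + 1) / 2) (e := (2 * ·)) rfl (by omega))]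
  rfl

lemma statB_eq_add_statD_tail (μ : IntPartition) : μ.statB = μ.parts 0 / 2 + μ.tail.statD := by
  rw [statB, finsum_eq_zero_add_finsum_succ
    (μ.finite_support_comp_parts (g := (· / 2)) (e := (2 * ·)) rfl (by omega))]
  rfl

lemma statC_eq_statA_tail (μ : IntPartition) : μ.statC = μ.tail.statA := rfl

lemma statD_eq_statB_tail (μ : IntPartition) : μ.statD = μ.tail.statB := rfl

lemma weight_eq_mul_weight_tail {R : Type*} [CommRing R] (a b c d : R) (μ : IntPartition) :
    weight a b c d μ =
      a ^ ((μ.parts 0 + 1) / 2) * b ^ (μ.parts 0 / 2) * weight c d a b μ.tail := by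
  rw [weight, weight, statA_eq_add_statC_tail μ, statB_eq_add_statD_tail μ,
    statC_eq_statA_tail μ, statD_eq_statB_tail μ]
  ring

lemma Strict.parts_lt {μ : IntPartition} (hμ : μ.Strict) {i j : ℕ} (hij : i < j)
    (hj : μ.parts j ≠ 0) : μ.parts j < μ.parts i := by
  obtain ⟨j, rfl⟩ : ∃ j', j = j' + 1 := ⟨j - 1, by omega⟩
  exact (hμ j hj).trans_le (μ.antitone (by omega))

def ofFinset (S : Finset ℕ) : IntPartition where
  parts i := (S.sort (· ≥ ·)).getD i 0
  antitone i j hij := by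
    dsimp only
    by_cases hj : j < (S.sort (· ≥ ·)).length
    · rw [List.getD_eq_getElem _ _ hj, List.getD_eq_getElem _ _ (hij.trans_lt hj)]
      exact (S.sortedGT_sort.sortedGE).getElem_ge_getElem_of_le hij
    · rw [List.getD_eq_default _ _ (not_lt.mp hj)]
      exact Nat.zero_le _
  fin_support := ⟨_, fun _ hn => List.getD_eq_default _ _ hn⟩

lemma ofFinset_parts (S : Finset ℕ) (i : ℕ) :
    (ofFinset S).parts i = (S.sort (· ≥ ·)).getD i 0 := rfl

lemma ofFinset_strict (S : Finset ℕ) : (ofFinset S).Strict := by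
  intro i hi
  have hlt : i + 1 < (S.sort (· ≥ ·)).length := by
    by_contra h
    exact hi (List.getD_eq_default _ _ (not_lt.mp h))
  rw [ofFinset_parts, ofFinset_parts, List.getD_eq_getElem _ _ hlt,
    List.getD_eq_getElem _ _ (by omega)]
  exact S.sortedGT_sort.getElem_gt_getElem_of_lt (Nat.lt_succ_self i)

lemma ofFinset_parts_eq_zero_or_mem (S : Finset ℕ) (i : ℕ) :
    (ofFinset S).parts i = 0 ∨ (ofFinset S).parts i ∈ S := by
  rw [ofFinset_parts]
  by_cases hi : i < (S.sort (· ≥ ·)).length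
  · rw [List.getD_eq_getElem _ _ hi]
    exact Or.inr ((S.mem_sort _).mp (List.getElem_mem hi))
  · exact Or.inl (List.getD_eq_default _ _ (not_lt.mp hi))

lemma exists_ofFinset_parts_eq {S : Finset ℕ} {x : ℕ} (hx : x ∈ S) :
    ∃ i, (ofFinset S).parts i = x := by
  obtain ⟨i, hi, rfl⟩ := List.mem_iff_getElem.mp ((S.mem_sort (· ≥ ·)).mpr hx)
  exact ⟨i, List.getD_eq_getElem _ _ hi⟩

lemma ofFinset_injOn : Set.InjOn ofFinset {S | 0 ∉ S} := by
  have key : ∀ {S T : Finset ℕ}, 0 ∉ S → ofFinset S = ofFinset T → S ⊆ T := by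
    intro S T hS hST x hx
    obtain ⟨i, rfl⟩ := exists_ofFinset_parts_eq hx
    rw [hST] at hx ⊢
    exact (ofFinset_parts_eq_zero_or_mem T i).resolve_left fun h => hS (h ▸ hx)
  exact fun S hS T hT hST => (key hS hST).antisymm (key hT hST.symm)

lemma exists_ofFinset_eq {μ : IntPartition} (hμ : μ.Strict) :
    ∃ S, 0 ∉ S ∧ ofFinset S = μ := by
  have hzero : ∃ n, μ.parts n = 0 := μ.fin_support.imp fun N hN => hN N le_rfl
  set k := Nat.find hzero
  have hpos : ∀ i < k, μ.parts i ≠ 0 := fun i hi => Nat.find_min hzero hi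
  have hvanish : ∀ i, k ≤ i → μ.parts i = 0 := fun i hi =>
    Nat.le_zero.mp ((μ.antitone hi).trans (Nat.find_spec hzero).le)
  set L := (List.range k).map μ.parts
  have hL : L.SortedGT := List.sortedGT_of_getElem_gt_getElem_of_lt fun i j hi hj hji => by
    simp only [L, List.getElem_map, List.getElem_range]
    exact hμ.parts_lt hji (hpos i (by simpa [L] using hi))
  have hsort : L.toFinset.sort (· ≥ ·) = L :=
    (List.toFinset_sort _ hL.nodup).mpr hL.sortedGE.pairwise
  refine ⟨L.toFinset, by simpa [L] using hpos, parts_injective ?_⟩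
  funext i
  rw [ofFinset_parts, hsort]
  by_cases hi : i < k
  · rw [List.getD_eq_getElem _ _ (by simpa [L])]
    simp [L]
  · rw [List.getD_eq_default _ _ (by simpa [L] using hi), hvanish i (not_lt.mp hi)]

lemma length_ofFinset {S : Finset ℕ} (h0 : 0 ∉ S) : (ofFinset S).length = S.card := by
  have hsupp : Function.support (ofFinset S).parts = Set.Iio S.card := by
    ext i
    rw [Function.mem_support, ofFinset_parts, Set.mem_Iio, ← length_sort (· ≥ ·)]
    by_cases hi : i < (S.sort (· ≥ ·)).length
    · rw [List.getD_eq_getElem _ _ hi]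
      exact iff_of_true (fun h => h0 (h ▸ (S.mem_sort _).mp (List.getElem_mem hi))) hi
    · exact iff_of_false (not_not.mpr (List.getD_eq_default _ _ (not_lt.mp hi))) hi
  rw [length, hsupp, Set.ncard_Iio_nat]

lemma ofFinset_insert_parts_zero {S : Finset ℕ} {m : ℕ} (hm : ∀ x ∈ S, x < m) :
    (ofFinset (insert m S)).parts 0 = m := by
  rw [ofFinset_parts, sort_insert _ (fun x hx => (hm x hx).le) fun h => (hm m h).false]
  rfl

lemma tail_ofFinset_insert {S : Finset ℕ} {m : ℕ} (hm : ∀ x ∈ S, x < m) :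
    (ofFinset (insert m S)).tail = ofFinset S := by
  refine parts_injective (funext fun i => ?_)
  show (ofFinset (insert m S)).parts (i + 1) = _
  rw [ofFinset_parts, sort_insert _ (fun x hx => (hm x hx).le) fun h => (hm m h).false]
  rfl

lemma weight_ofFinset_empty {R : Type*} [CommRing R] (a b c d : R) :
    weight a b c d (ofFinset ∅) = 1 := by
  simp [weight, statA, statB, statC, statD, ofFinset_parts]

end IntPartition

open IntPartition

lemma zero_notMem_of_mem_powerset_Icc {S : Finset ℕ} {M : ℕ} (hS : S ∈ (Icc 1 M).powerset) :
    0 ∉ S := fun h => by simpa using mem_powerset.mp hS h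

noncomputable def powersetIccEquivStrict (M : ℕ) :
    (Icc 1 M).powerset ≃ {μ : IntPartition // μ.Strict ∧ μ.parts 0 ≤ M} := by
  refine Equiv.ofBijective (fun S => ⟨ofFinset S, ofFinset_strict S, ?_⟩) ⟨?_, ?_⟩
  · rcases ofFinset_parts_eq_zero_or_mem S.1 0 with h | h
    · exact h.trans_le (Nat.zero_le M)
    · exact (mem_Icc.mp (mem_powerset.mp S.2 h)).2
  · intro S T h
    exact Subtype.ext (ofFinset_injOn (zero_notMem_of_mem_powerset_Icc S.2)
      (zero_notMem_of_mem_powerset_Icc T.2) (congrArg Subtype.val h))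
  · rintro ⟨μ, hμ, hle⟩
    obtain ⟨S, h0, rfl⟩ := exists_ofFinset_eq hμ
    refine ⟨⟨S, mem_powerset.mpr fun x hx => mem_Icc.mpr ⟨?_, ?_⟩⟩, rfl⟩
    · exact Nat.one_le_iff_ne_zero.mpr fun h => h0 (h ▸ hx)
    · obtain ⟨i, rfl⟩ := exists_ofFinset_parts_eq hx
      exact ((ofFinset S).antitone (Nat.zero_le i)).trans hle

section Psi

variable {R : Type*} [CommRing R]

lemma psi_eq_sum_powerset (a b c d z : R) (M : ℕ) :
    Psi a b c d z M = ∑ S ∈ (Icc 1 M).powerset, weight a b c d (ofFinset S) * z ^ S.card := by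
  rw [Psi, ← finsum_eq_of_bijective (powersetIccEquivStrict M) (Equiv.bijective _)
      (f := fun S => weight a b c d (ofFinset S.1) * z ^ S.1.card),
    finsum_eq_sum_of_fintype,
    sum_coe_sort (f := fun S => weight a b c d (ofFinset S) * z ^ S.card)]
  intro S
  rw [← length_ofFinset (zero_notMem_of_mem_powerset_Icc S.2)]
  rfl

lemma psi_zero (a b c d z : R) : Psi a b c d z 0 = 1 := by
  simp [psi_eq_sum_powerset, weight_ofFinset_empty]

lemma psi_succ (a b c d z : R) (M : ℕ) :
    Psi a b c d z (M + 1) =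
      Psi a b c d z M + z * a ^ ((M + 2) / 2) * b ^ ((M + 1) / 2) * Psi c d a b z M := by
  have hlt : ∀ S ∈ (Icc 1 M).powerset, ∀ x ∈ S, x < M + 1 := fun S hS x hx =>
    Nat.lt_succ_of_le (mem_Icc.mp (mem_powerset.mp hS hx)).2
  simp only [psi_eq_sum_powerset]
  rw [← insert_Icc_right_eq_Icc_add_one (Nat.le_add_left 1 M),
    sum_powerset_insert (by simp), mul_sum]
  congr 1
  refine sum_congr rfl fun S hS => ?_
  rw [weight_eq_mul_weight_tail, ofFinset_insert_parts_zero (hlt S hS),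
    tail_ofFinset_insert (hlt S hS), card_insert_of_notMem fun h => (hlt S hS _ h).false]
  ring

end Psi

section QSeries

lemma poch_zero {R : Type*} [CommRing R] (x q : R) : poch x q 0 = 1 :=
  prod_range_zero _

lemma poch_succ {R : Type*} [CommRing R] (x q : R) (n : ℕ) :
    poch x q (n + 1) = poch x q n * (1 - x * q ^ n) :=
  prod_range_succ _ n

lemma poch_ne_zero_of_le {R : Type*} [CommRing R] {x q : R} {m n : ℕ} (h : poch x q n ≠ 0)
    (hmn : m ≤ n) : poch x q m ≠ 0 :=
  ne_zero_of_dvd_ne_zero h (prod_dvd_prod_of_subset _ _ _ (range_subset_range.mpr hmn))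

variable {K : Type*} [Field K]

lemma poch_self_ne_zero {q : K} {N : ℕ} (h : ∀ j, 1 ≤ j → j ≤ N → (1 : K) - q ^ j ≠ 0) :
    poch q q N ≠ 0 :=
  prod_ne_zero_iff.mpr fun k hk => by
    rw [← pow_succ']
    exact h (k + 1) (Nat.le_add_left 1 k) (mem_range.mp hk)

lemma gauss_symm (q : K) {N k : ℕ} (hk : k ≤ N) : gauss q N (N - k) = gauss q N k := by
  rw [gauss, gauss, Nat.sub_sub_self hk, mul_comm]

lemma gauss_zero (q : K) {N : ℕ} (hN : poch q q N ≠ 0) : gauss q N 0 = 1 := by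
  rw [gauss, Nat.sub_zero, poch_zero, one_mul, div_self hN]

lemma gauss_self (q : K) {N : ℕ} (hN : poch q q N ≠ 0) : gauss q N N = 1 := by
  rw [gauss, Nat.sub_self, poch_zero, mul_one, div_self hN]

lemma gauss_succ_succ (q : K) {N k : ℕ} (hN : poch q q N ≠ 0) (hk : k < N) :
    gauss q (N + 1) (k + 1) = gauss q N k + q ^ (k + 1) * gauss q N (k + 1) := by
  obtain ⟨m, rfl⟩ : ∃ m, N = k + 1 + m := ⟨N - (k + 1), by omega⟩
  obtain ⟨hk0, hk1⟩ := mul_ne_zero_iff.mp (poch_succ q q k ▸ poch_ne_zero_of_le hN (by omega))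
  obtain ⟨hm0, hm1⟩ := mul_ne_zero_iff.mp (poch_succ q q m ▸ poch_ne_zero_of_le hN (by omega))
  simp only [gauss, show k + 1 + m + 1 - (k + 1) = m + 1 by omega,
    show k + 1 + m - k = m + 1 by omega, show k + 1 + m - (k + 1) = m by omega,
    poch_succ q q (k + 1 + m), poch_succ q q k, poch_succ q q m]
  field_simp
  ring

lemma sum_gauss_succ (q : K) {N : ℕ} (hN : poch q q (N + 1) ≠ 0) (f : ℕ → K) :
    ∑ k ∈ range (N + 2), gauss q (N + 1) k * f k =
      ∑ k ∈ range (N + 1), gauss q N k * f (k + 1) +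
        ∑ k ∈ range (N + 1), q ^ k * gauss q N k * f k := by
  have hN' := poch_ne_zero_of_le hN N.le_succ
  rw [sum_range_succ', sum_range_succ, sum_range_succ (fun k => gauss q N k * f (k + 1)),
    sum_range_succ', gauss_zero q hN, gauss_zero q hN', gauss_self q hN, gauss_self q hN',
    ← sum_congr rfl fun k hk => (by rw [gauss_succ_succ q hN' (mem_range.mp hk)]; ring :
      gauss q N k * f (k + 1) + q ^ (k + 1) * gauss q N (k + 1) * f (k + 1) =
        gauss q (N + 1) (k + 1) * f (k + 1)), sum_add_distrib]
  ring

lemma sum_gauss_reflect (q : K) (N : ℕ) (f : ℕ → ℕ → K) :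
    ∑ k ∈ range (N + 1), gauss q N k * f k (N - k) =
      ∑ k ∈ range (N + 1), gauss q N k * f (N - k) k := by
  rw [← sum_range_reflect]
  refine sum_congr rfl fun k hk => ?_
  have hk : k ≤ N := Nat.lt_succ_iff.mp (mem_range.mp hk)
  rw [Nat.add_sub_cancel, Nat.sub_sub_self hk, gauss_symm q hk]

noncomputable def psiEvenForm (q a b c : K) (N : ℕ) : K :=
  ∑ k ∈ range (N + 1), gauss q N k * poch (-a) q k * poch (-c) q (N - k) * (a * b) ^ (N - k)

noncomputable def psiOddForm (q a b c : K) (N : ℕ) : K :=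
  ∑ k ∈ range (N + 1),
    gauss q N k * poch (-a) q (k + 1) * poch (-c) q (N - k) * (a * b) ^ (N - k)

lemma psiOddForm_eq {q a b c d : K} (hq : q = a * b * c * d) (N : ℕ) :
    psiOddForm q a b c N =
      psiEvenForm q a b c N + a ^ (N + 1) * b ^ N * psiEvenForm q c d a N := by
  have hrefl := sum_gauss_reflect q N fun i j => poch (-c) q i * poch (-a) q j * (c * d) ^ j
  simp only [← mul_assoc] at hrefl
  rw [psiOddForm, psiEvenForm, psiEvenForm, hrefl, mul_sum, ← sum_add_distrib]
  refine sum_congr rfl fun k hk => ?_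
  obtain ⟨m, rfl⟩ : ∃ m, N = m + k := ⟨N - k, by have := mem_range.mp hk; omega⟩
  rw [poch_succ, Nat.add_sub_cancel, hq]
  ring

lemma psiEvenForm_succ {q a b c d : K} (hq : q = a * b * c * d) {N : ℕ}
    (hN : poch q q (N + 1) ≠ 0) :
    psiEvenForm q a b c (N + 1) =
      psiOddForm q a b c N + (a * b) ^ (N + 1) * psiOddForm q c d a N := by
  have hsplit := sum_gauss_succ q hN fun k =>
    poch (-a) q k * poch (-c) q (N + 1 - k) * (a * b) ^ (N + 1 - k)
  have hrefl := sum_gauss_reflect q N fun i j => poch (-c) q (i + 1) * poch (-a) q j * (c * d) ^ j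
  simp only [← mul_assoc, Nat.add_sub_add_right] at hsplit hrefl
  rw [psiEvenForm, hsplit, psiOddForm, psiOddForm, hrefl, mul_sum]
  congr 1
  refine sum_congr rfl fun k hk => ?_
  obtain ⟨m, rfl⟩ : ∃ m, N = m + k := ⟨N - k, by have := mem_range.mp hk; omega⟩
  rw [show m + k + 1 - k = m + 1 by omega, Nat.add_sub_cancel, hq]
  ring

theorem psi_two_mul_eq_psiEvenForm {q a b c d : K} (hq : q = a * b * c * d) {N : ℕ}
    (hN : poch q q N ≠ 0) : Psi a b c d 1 (2 * N) = psiEvenForm q a b c N := by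
  induction N generalizing a b c d with
  | zero => simp [psi_zero, psiEvenForm, gauss_zero q hN, poch_zero]
  | succ N ih =>
    have hN' := poch_ne_zero_of_le hN N.le_succ
    have hodd : ∀ {x y z w : K}, q = x * y * z * w →
        Psi x y z w 1 (2 * N + 1) = psiOddForm q x y z N := fun hxyzw => by
      rw [psi_succ, ih hxyzw hN', ih (by rw [hxyzw]; ring) hN', psiOddForm_eq hxyzw,
        show (2 * N + 2) / 2 = N + 1 by omega, show (2 * N + 1) / 2 = N by omega, one_mul]
    rw [show 2 * (N + 1) = 2 * N + 1 + 1 by ring, psi_succ, hodd hq, hodd (by rw [hq]; ring),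
      psiEvenForm_succ hq hN, show (2 * N + 1 + 2) / 2 = N + 1 by omega,
      show (2 * N + 1 + 1) / 2 = N + 1 by omega, one_mul, mul_pow]

end QSeries

theorem psi_even_gauss {K : Type*} [Field K] (a b c d q : K) (N : ℕ)
    (hq : q = a * b * c * d) (h : ∀ j, 1 ≤ j → j ≤ N → (1 : K) - q ^ j ≠ 0) :
    Psi a b c d 1 (2 * N) =
      ∑ k ∈ Finset.range (N + 1),
        gauss q N k * poch (-a) q k * poch (-c) q (N - k) * (a * b) ^ (N - k) :=
  psi_two_mul_eq_psiEvenForm hq (poch_self_ne_zero h)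
end

section
/- Let R be a commutative ring and a,b,c,d,z ∈ R, and set q = abcd. Define T_N = Σ_{t=0}^{⌊N/2⌋} Φ_{N−2t, 2t}(a,b,c,d) · z^t · q^{C(t,2)}, where C(t,2) = t(t−1)/2. Then for every integer N ≥ 1: T_{2N} = (1+b)·T_{2N−1} + (q^{N−1}z − b)·T_{2N−2}, and T_{2N+1} = (1+a)·T_{2N} + (a^N b^{N−1} c^N d^{N−1} z − a)·T_{2N−1}. -/
open scoped BigOperators

/-- Φ_{N,M}(a,b,c,d): the sum of ω(λ) over partitions λ with at most M parts,
each part ≤ N. -/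
noncomputable def PhiNM {R : Type*} [CommRing R] (a b c d : R) (N M : ℕ) : R :=
  ∑ᶠ l : {l : IntPartition // l.parts 0 ≤ N ∧ l.length ≤ M},
    IntPartition.weight a b c d l.1

/-- T_N = Σ_{t=0}^{⌊N/2⌋} Φ_{N−2t,2t}(a,b,c,d) z^t q^{C(t,2)}. -/
noncomputable def TGen {R : Type*} [CommRing R] (a b c d z : R) (N : ℕ) : R :=
  ∑ t ∈ Finset.range (N / 2 + 1),
    PhiNM a b c d (N - 2 * t) (2 * t) * z ^ t * (a * b * c * d) ^ (t.choose 2)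

namespace ASaux
open IntPartition

theorem pext {l m : IntPartition} (h : l.parts = m.parts) : l = m := by
  cases l; cases m; simpa using h

theorem supp_finite (l : IntPartition) : (Function.support l.parts).Finite := by
  obtain ⟨B, hB⟩ := l.fin_support
  exact Set.Finite.subset (Set.finite_Iio B) (fun n hn => by
    by_contra h
    exact hn (hB n (le_of_not_gt h)))

theorem parts_ne_iff (l : IntPartition) (n : ℕ) : l.parts n ≠ 0 ↔ n < l.length := by
  have hfin := supp_finite l
  have hdc : ∀ m k : ℕ, m ≤ k → l.parts k ≠ 0 → l.parts m ≠ 0 := by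
    intro m k h hk hm
    exact hk (Nat.le_zero.mp (hm ▸ l.antitone h))
  have key : Function.support l.parts = Set.Iio l.length := by
    rcases Set.eq_empty_or_nonempty (Function.support l.parts) with he | hne
    · have : l.length = 0 := by simp [length, he]
      rw [he, this]; ext k; simp
    · have hne' : hfin.toFinset.Nonempty := by
        simpa [Set.Finite.toFinset_nonempty] using hne
      set m := hfin.toFinset.max' hne' with hm
      have hsupp : Function.support l.parts = Set.Iic m := by
        ext n
        constructor
        · intro hn
          exact hfin.toFinset.le_max' n (hfin.mem_toFinset.mpr hn)
        · intro hn
          have hmm : l.parts m ≠ 0 := hfin.mem_toFinset.mp (hfin.toFinset.max'_mem hne')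
          exact hdc n m hn hmm
      have hlen : l.length = m + 1 := by
        rw [length, hsupp, ← Finset.coe_Iic, Set.ncard_coe_finset, Nat.card_Iic]
      rw [hsupp, hlen]
      ext k; simp [Nat.lt_succ_iff]
  constructor
  · intro h; rw [← Set.mem_Iio, ← key]; exact h
  · intro h; have : n ∈ Function.support l.parts := key ▸ h; exact this

theorem parts_eq_zero_iff (l : IntPartition) (n : ℕ) : l.parts n = 0 ↔ l.length ≤ n := by
  constructor
  · intro h
    by_contra hc
    exact absurd ((parts_ne_iff l n).mpr (by omega)) (by simp [h])
  · intro h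
    by_contra hc
    have := (parts_ne_iff l n).mp hc
    omega

theorem length_le_iff (l : IntPartition) (M : ℕ) : l.length ≤ M ↔ l.parts M = 0 :=
  (parts_eq_zero_iff l M).symm

theorem length_eq_of (l : IntPartition) (k : ℕ) (h : ∀ n, l.parts n ≠ 0 ↔ n < k) :
    l.length = k := by
  have : Function.support l.parts = Set.Iio k := by ext n; simpa using h n
  rw [length, this, ← Finset.coe_Iio, Set.ncard_coe_finset, Nat.card_Iio]

/-- the zero partition -/
def pzero : IntPartition := ⟨fun _ => 0, fun _ _ _ => le_rfl, ⟨0, fun _ _ => rfl⟩⟩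

@[simp] theorem pzero_parts (n : ℕ) : pzero.parts n = 0 := rfl

theorem pzero_length : pzero.length = 0 :=
  length_eq_of _ 0 (by simp)

/-- remove the first part -/
def tail (l : IntPartition) : IntPartition :=
  ⟨fun n => l.parts (n + 1),
   fun m n h => l.antitone (by omega),
   by obtain ⟨B, hB⟩ := l.fin_support; exact ⟨B, fun n hn => hB (n + 1) (by omega)⟩⟩

@[simp] theorem tail_parts (l : IntPartition) (n : ℕ) : (tail l).parts n = l.parts (n + 1) := rfl

/-- prepend a part -/
def cons (K : ℕ) (l : IntPartition) (h : l.parts 0 ≤ K) : IntPartition :=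
  ⟨fun n => match n with | 0 => K | n + 1 => l.parts n,
   antitone_nat_of_succ_le (by
     intro n
     match n with
     | 0 => exact h
     | n + 1 => exact l.antitone (by omega)),
   by obtain ⟨B, hB⟩ := l.fin_support; exact ⟨B + 1, fun n hn => by
        match n, hn with
        | n + 1, hn => exact hB n (by omega)⟩⟩

@[simp] theorem cons_parts_zero (K : ℕ) (l : IntPartition) (h : l.parts 0 ≤ K) :
    (cons K l h).parts 0 = K := rfl
@[simp] theorem cons_parts_succ (K : ℕ) (l : IntPartition) (h : l.parts 0 ≤ K) (n : ℕ) :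
    (cons K l h).parts (n + 1) = l.parts n := rfl

theorem tail_cons (K : ℕ) (l : IntPartition) (h : l.parts 0 ≤ K) : tail (cons K l h) = l := by
  apply pext; funext n; rfl

theorem cons_tail (l : IntPartition) (K : ℕ) (hK : l.parts 0 = K) (h : (tail l).parts 0 ≤ K) :
    cons K (tail l) h = l := by
  apply pext; funext n
  match n with
  | 0 => simpa using hK.symm
  | n + 1 => rfl

theorem length_cons (K : ℕ) (l : IntPartition) (h : l.parts 0 ≤ K) (hK : K ≠ 0) :
    (cons K l h).length = l.length + 1 := by
  apply length_eq_of
  intro n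
  match n with
  | 0 => simpa using hK
  | n + 1 =>
    simp only [cons_parts_succ]
    rw [parts_ne_iff]
    omega

theorem length_tail (l : IntPartition) (h : l.parts 0 ≠ 0) :
    (tail l).length + 1 = l.length := by
  have h0 : 0 < l.length := (parts_ne_iff l 0).mp h
  have : (tail l).length = l.length - 1 := by
    apply length_eq_of
    intro n
    simp only [tail_parts]
    rw [parts_ne_iff]
    omega
  omega

/-- peel the first term off a finitely supported finsum over ℕ -/
theorem finsum_nat_succ (g : ℕ → ℕ) (B : ℕ) (hB : ∀ n, B ≤ n → g n = 0) :
    ∑ᶠ i, g i = g 0 + ∑ᶠ i, g (i + 1) := by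
  have h1 : ∑ᶠ i, g i = ∑ i ∈ Finset.range (B + 1), g i := by
    apply finsum_eq_sum_of_support_subset
    intro n hn
    simp only [Finset.coe_range, Set.mem_Iio]
    by_contra hc
    exact hn (hB n (by omega))
  have h2 : ∑ᶠ i, g (i + 1) = ∑ i ∈ Finset.range B, g (i + 1) := by
    apply finsum_eq_sum_of_support_subset
    intro n hn
    simp only [Finset.coe_range, Set.mem_Iio]
    by_contra hc
    exact hn (hB (n + 1) (by omega))
  rw [h1, h2, Finset.sum_range_succ']
  ring

theorem statA_cons (K : ℕ) (l : IntPartition) (h : l.parts 0 ≤ K) :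
    (cons K l h).statA = (K + 1) / 2 + l.statC := by
  obtain ⟨B, hB⟩ := l.fin_support
  have := finsum_nat_succ (fun i => ((cons K l h).parts (2 * i) + 1) / 2) (B + 1)
    (fun n hn => by
      match n, hn with
      | n + 1, hn =>
        have h2 : 2 * (n + 1) = (2 * n + 1) + 1 := by ring
        simp only [h2, cons_parts_succ, hB (2 * n + 1) (by omega)])
  rw [statA, this]
  congr 1

theorem statB_cons (K : ℕ) (l : IntPartition) (h : l.parts 0 ≤ K) :
    (cons K l h).statB = K / 2 + l.statD := by
  obtain ⟨B, hB⟩ := l.fin_support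
  have := finsum_nat_succ (fun i => (cons K l h).parts (2 * i) / 2) (B + 1)
    (fun n hn => by
      match n, hn with
      | n + 1, hn =>
        have h2 : 2 * (n + 1) = (2 * n + 1) + 1 := by ring
        simp only [h2, cons_parts_succ, hB (2 * n + 1) (by omega)])
  rw [statB, this]
  congr 1

theorem statC_cons (K : ℕ) (l : IntPartition) (h : l.parts 0 ≤ K) :
    (cons K l h).statC = l.statA := by
  rw [statC, statA]
  apply finsum_congr
  intro i
  rw [cons_parts_succ]

theorem statD_cons (K : ℕ) (l : IntPartition) (h : l.parts 0 ≤ K) :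
    (cons K l h).statD = l.statB := by
  rw [statD, statB]
  apply finsum_congr
  intro i
  rw [cons_parts_succ]

theorem weight_cons {R : Type*} [CommRing R] (a b c d : R) (K : ℕ) (l : IntPartition)
    (h : l.parts 0 ≤ K) :
    weight a b c d (cons K l h) =
      a ^ ((K + 1) / 2) * b ^ (K / 2) * weight c d a b l := by
  rw [weight, weight, statA_cons, statB_cons, statC_cons, statD_cons, pow_add, pow_add]
  ring

theorem weight_pzero {R : Type*} [CommRing R] (a b c d : R) :
    weight a b c d pzero = 1 := by
  have hA : pzero.statA = 0 := by rw [statA]; simp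
  have hB : pzero.statB = 0 := by rw [statB]; simp
  have hC : pzero.statC = 0 := by rw [statC]; simp
  have hD : pzero.statD = 0 := by rw [statD]; simp
  rw [weight, hA, hB, hC, hD]; ring

instance finSub (N M : ℕ) : Finite {l : IntPartition // l.parts 0 ≤ N ∧ l.length ≤ M} := by
  apply Finite.of_injective (fun l => (fun i : Fin M => (⟨l.1.parts i,
    Nat.lt_succ_of_le (le_trans (l.1.antitone (Nat.zero_le _)) l.2.1)⟩ : Fin (N + 1))))
  intro x y hxy
  apply Subtype.ext; apply pext; funext n
  by_cases hn : n < M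
  · have := congrFun hxy ⟨n, hn⟩
    simpa using this
  · have hx : x.1.parts n = 0 := (parts_eq_zero_iff _ _).mpr (le_trans x.2.2 (by omega))
    have hy : y.1.parts n = 0 := (parts_eq_zero_iff _ _).mpr (le_trans y.2.2 (by omega))
    rw [hx, hy]

theorem PhiNM_M_zero {R : Type*} [CommRing R] (a b c d : R) (N : ℕ) :
    PhiNM a b c d N 0 = 1 := by
  have hz : (pzero.parts 0 ≤ N ∧ pzero.length ≤ 0) := ⟨by simp, by rw [pzero_length]⟩
  have huniq : ∀ x : {l : IntPartition // l.parts 0 ≤ N ∧ l.length ≤ 0},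
      x = ⟨pzero, hz⟩ := by
    intro x
    apply Subtype.ext; apply pext; funext n
    have : x.1.parts n = 0 := (parts_eq_zero_iff _ _).mpr (le_trans x.2.2 (Nat.zero_le _))
    simpa using this
  rw [PhiNM, finsum_eq_single _ (⟨pzero, hz⟩ : {l : IntPartition // l.parts 0 ≤ N ∧ l.length ≤ 0})
    (fun x hx => absurd (huniq x) hx)]
  exact weight_pzero a b c d

theorem PhiNM_N_zero {R : Type*} [CommRing R] (a b c d : R) (M : ℕ) :
    PhiNM a b c d 0 M = 1 := by
  have hz : (pzero.parts 0 ≤ 0 ∧ pzero.length ≤ M) :=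
    ⟨le_refl 0, by rw [pzero_length]; exact Nat.zero_le M⟩
  have huniq : ∀ x : {l : IntPartition // l.parts 0 ≤ 0 ∧ l.length ≤ M},
      x = ⟨pzero, hz⟩ := by
    intro x
    apply Subtype.ext; apply pext; funext n
    have : x.1.parts n = 0 :=
      Nat.le_zero.mp (le_trans (x.1.antitone (Nat.zero_le n)) x.2.1)
    simpa using this
  rw [PhiNM, finsum_eq_single _ (⟨pzero, hz⟩ : {l : IntPartition // l.parts 0 ≤ 0 ∧ l.length ≤ M})
    (fun x hx => absurd (huniq x) hx)]
  exact weight_pzero a b c d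

theorem PhiNM_rec {R : Type*} [CommRing R] (a b c d : R) (N M : ℕ) :
    PhiNM a b c d (N + 1) (M + 1) =
      PhiNM a b c d N (M + 1) +
        a ^ ((N + 2) / 2) * b ^ ((N + 1) / 2) * PhiNM c d a b (N + 1) M := by
  set Z := {l : IntPartition // l.parts 0 ≤ N + 1 ∧ l.length ≤ M + 1} with hZ
  set X := {l : IntPartition // l.parts 0 ≤ N ∧ l.length ≤ M + 1} with hX
  set Y := {l : IntPartition // l.parts 0 ≤ N + 1 ∧ l.length ≤ M} with hY
  let e : X ⊕ Y → Z := Sum.elim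
    (fun x => ⟨x.1, le_trans x.2.1 (Nat.le_succ N), x.2.2⟩)
    (fun y => ⟨cons (N + 1) y.1 y.2.1, le_refl _,
      by rw [length_cons _ _ _ (Nat.succ_ne_zero N)]; omega⟩)
  have he : Function.Bijective e := by
    constructor
    · rintro (x | y) (x' | y') h
      · have h' := Subtype.ext_iff.mp h
        simp only [e, Sum.elim_inl] at h'
        rw [Sum.inl.injEq]; exact Subtype.ext h'
      · exfalso
        have h' := Subtype.ext_iff.mp h
        simp only [e, Sum.elim_inl, Sum.elim_inr] at h'
        have h0 := x.2.1
        rw [h', cons_parts_zero] at h0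
        omega
      · exfalso
        have h' := Subtype.ext_iff.mp h
        simp only [e, Sum.elim_inl, Sum.elim_inr] at h'
        have h0 := x'.2.1
        rw [← h', cons_parts_zero] at h0
        omega
      · have h' := Subtype.ext_iff.mp h
        simp only [e, Sum.elim_inr] at h'
        have : y.1 = y'.1 := by
          rw [← tail_cons (N + 1) y.1 y.2.1, ← tail_cons (N + 1) y'.1 y'.2.1, h']
        rw [Sum.inr.injEq]; exact Subtype.ext this
    · intro z
      by_cases hz : z.1.parts 0 ≤ N
      · exact ⟨Sum.inl ⟨z.1, hz, z.2.2⟩, rfl⟩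
      · have h0 : z.1.parts 0 = N + 1 := by have := z.2.1; omega
        have hne : z.1.parts 0 ≠ 0 := by omega
        have htl : (tail z.1).parts 0 ≤ N + 1 := by
          have : z.1.parts 1 ≤ z.1.parts 0 := z.1.antitone (by omega)
          have h2 := z.2.1
          simpa using (le_trans this h2)
        have hlen : (tail z.1).length ≤ M := by
          have := length_tail z.1 hne
          have h2 := z.2.2
          omega
        exact ⟨Sum.inr ⟨tail z.1, htl, hlen⟩, Subtype.ext (cons_tail z.1 (N + 1) h0 htl)⟩
  letI : Fintype Z := Fintype.ofFinite _
  letI : Fintype X := Fintype.ofFinite _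
  letI : Fintype Y := Fintype.ofFinite _
  have coef : ∀ y : Y, weight a b c d (cons (N + 1) y.1 y.2.1) =
      a ^ ((N + 2) / 2) * b ^ ((N + 1) / 2) * weight c d a b y.1 := by
    intro y
    rw [weight_cons]
  calc PhiNM a b c d (N + 1) (M + 1) = ∑ l : Z, weight a b c d l.1 :=
        finsum_eq_sum_of_fintype _
    _ = ∑ p : X ⊕ Y, weight a b c d (e p).1 :=
        (Equiv.sum_comp (Equiv.ofBijective e he) (fun l : Z => weight a b c d l.1)).symm
    _ = (∑ x : X, weight a b c d x.1) +
          ∑ y : Y, a ^ ((N + 2) / 2) * b ^ ((N + 1) / 2) * weight c d a b y.1 := by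
        rw [Fintype.sum_sum_type]
        congr 1
        apply Finset.sum_congr rfl
        intro y _
        exact coef y
    _ = PhiNM a b c d N (M + 1) +
          a ^ ((N + 2) / 2) * b ^ ((N + 1) / 2) * PhiNM c d a b (N + 1) M := by
        rw [← Finset.mul_sum]
        congr 1
        · exact (finsum_eq_sum_of_fintype _).symm
        · congr 1
          exact (finsum_eq_sum_of_fintype _).symm

theorem recA {R : Type*} [CommRing R] (a b c d : R) (k t : ℕ) :
    PhiNM a b c d (2 * k + 2) (2 * t + 2) + b * PhiNM a b c d (2 * k) (2 * t + 2) =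
      (1 + b) * PhiNM a b c d (2 * k + 1) (2 * t + 2) +
        (a * b * c * d) ^ (k + 1) * PhiNM a b c d (2 * k + 2) (2 * t) := by
  have h1 := PhiNM_rec a b c d (2 * k + 1) (2 * t + 1)
  have h2 := PhiNM_rec a b c d (2 * k) (2 * t + 1)
  have h3 := PhiNM_rec c d a b (2 * k + 1) (2 * t)
  have n1 : 2 * k + 1 + 1 = 2 * k + 2 := by omega
  have n2 : 2 * t + 1 + 1 = 2 * t + 2 := by omega
  have n3 : (2 * k + 1 + 2) / 2 = k + 1 := by omega
  have n4 : (2 * k + 2) / 2 = k + 1 := by omega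
  have n5 : (2 * k + 1) / 2 = k := by omega
  simp only [n1, n2, n3, n4, n5] at h1 h2 h3
  rw [h1, h2, h3]
  ring

theorem recB {R : Type*} [CommRing R] (a b c d : R) (k t : ℕ) :
    PhiNM a b c d (2 * k + 3) (2 * t + 2) + a * PhiNM a b c d (2 * k + 1) (2 * t + 2) =
      (1 + a) * PhiNM a b c d (2 * k + 2) (2 * t + 2) +
        a ^ (k + 2) * b ^ (k + 1) * c ^ (k + 2) * d ^ (k + 1) *
          PhiNM a b c d (2 * k + 3) (2 * t) := by
  have h1 := PhiNM_rec a b c d (2 * k + 2) (2 * t + 1)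
  have h2 := PhiNM_rec a b c d (2 * k + 1) (2 * t + 1)
  have h3 := PhiNM_rec c d a b (2 * k + 2) (2 * t)
  have n1 : 2 * k + 2 + 1 = 2 * k + 3 := by omega
  have n2 : 2 * t + 1 + 1 = 2 * t + 2 := by omega
  have n3 : (2 * k + 2 + 2) / 2 = k + 2 := by omega
  have n4 : (2 * k + 2 + 1) / 2 = k + 1 := by omega
  have n5 : (2 * k + 1 + 2) / 2 = k + 1 := by omega
  have n6 : (2 * k + 1 + 1) / 2 = k + 1 := by omega
  simp only [n1, n2, n3, n4, n5, n6] at h1 h2 h3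
  rw [h1, h2, h3]
  ring

theorem recE {R : Type*} [CommRing R] (a b c d : R) (t : ℕ) :
    PhiNM a b c d 1 (2 * t + 2) = 1 + a + a * c * PhiNM a b c d 1 (2 * t) := by
  have h1 := PhiNM_rec a b c d 0 (2 * t + 1)
  have h2 := PhiNM_rec c d a b 0 (2 * t)
  have n1 : (0 : ℕ) + 1 = 1 := by omega
  have n2 : 2 * t + 1 + 1 = 2 * t + 2 := by omega
  have n3 : ((0 : ℕ) + 2) / 2 = 1 := by omega
  have n4 : ((0 : ℕ) + 1) / 2 = 0 := by omega
  simp only [n1, n2, n3, n4, pow_one, pow_zero, mul_one] at h1 h2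
  rw [h1, h2, PhiNM_N_zero, PhiNM_N_zero]
  ring

theorem sumLem {R : Type*} [CommRing R] (p r W : R) (F2 F1 F0 : ℕ → R) (n : ℕ)
    (h0 : F2 0 + p * F0 0 = r * F1 0)
    (hstep : ∀ s, s < n → F2 (s + 1) + p * F0 (s + 1) = r * F1 (s + 1) + W * F0 s)
    (hlast : F2 (n + 1) = W * F0 n) :
    ∑ t ∈ Finset.range (n + 2), F2 t =
      r * ∑ t ∈ Finset.range (n + 1), F1 t + (W - p) * ∑ t ∈ Finset.range (n + 1), F0 t := by
  calc ∑ t ∈ Finset.range (n + 2), F2 t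
      = ∑ t ∈ Finset.range (n + 1), F2 t + F2 (n + 1) := Finset.sum_range_succ _ _
    _ = (∑ t ∈ Finset.range (n + 1), (F2 t + p * F0 t)
          - p * ∑ t ∈ Finset.range (n + 1), F0 t) + W * F0 n := by
        rw [Finset.sum_add_distrib, ← Finset.mul_sum, hlast]; ring
    _ = ((∑ s ∈ Finset.range n, (F2 (s + 1) + p * F0 (s + 1)) + (F2 0 + p * F0 0))
          - p * ∑ t ∈ Finset.range (n + 1), F0 t) + W * F0 n := by
        rw [Finset.sum_range_succ']
    _ = ((∑ s ∈ Finset.range n, (r * F1 (s + 1) + W * F0 s) + r * F1 0)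
          - p * ∑ t ∈ Finset.range (n + 1), F0 t) + W * F0 n := by
        rw [Finset.sum_congr rfl (fun s hs => hstep s (Finset.mem_range.mp hs)), h0]
    _ = r * (∑ s ∈ Finset.range n, F1 (s + 1) + F1 0)
          + W * (∑ s ∈ Finset.range n, F0 s + F0 n)
          - p * ∑ t ∈ Finset.range (n + 1), F0 t := by
        rw [Finset.sum_add_distrib, ← Finset.mul_sum, ← Finset.mul_sum]; ring
    _ = r * ∑ t ∈ Finset.range (n + 1), F1 t
          + W * ∑ t ∈ Finset.range (n + 1), F0 t
          - p * ∑ t ∈ Finset.range (n + 1), F0 t := by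
        rw [← Finset.sum_range_succ' F1 n, ← Finset.sum_range_succ F0 n]
    _ = r * ∑ t ∈ Finset.range (n + 1), F1 t
          + (W - p) * ∑ t ∈ Finset.range (n + 1), F0 t := by ring

theorem sumLem2 {R : Type*} [CommRing R] (p r W : R) (F3 F2 F1 : ℕ → R) (n : ℕ)
    (h0 : F3 0 + p * F1 0 = r * F2 0)
    (hstep : ∀ s, s < n → F3 (s + 1) + p * F1 (s + 1) = r * F2 (s + 1) + W * F1 s)
    (hlast : F3 (n + 1) = r * F2 (n + 1) + W * F1 n) :
    ∑ t ∈ Finset.range (n + 2), F3 t =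
      r * ∑ t ∈ Finset.range (n + 2), F2 t + (W - p) * ∑ t ∈ Finset.range (n + 1), F1 t := by
  calc ∑ t ∈ Finset.range (n + 2), F3 t
      = ∑ t ∈ Finset.range (n + 1), F3 t + F3 (n + 1) := Finset.sum_range_succ _ _
    _ = (∑ t ∈ Finset.range (n + 1), (F3 t + p * F1 t)
          - p * ∑ t ∈ Finset.range (n + 1), F1 t) + (r * F2 (n + 1) + W * F1 n) := by
        rw [Finset.sum_add_distrib, ← Finset.mul_sum, hlast]; ring
    _ = ((∑ s ∈ Finset.range n, (F3 (s + 1) + p * F1 (s + 1)) + (F3 0 + p * F1 0))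
          - p * ∑ t ∈ Finset.range (n + 1), F1 t) + (r * F2 (n + 1) + W * F1 n) := by
        rw [Finset.sum_range_succ']
    _ = ((∑ s ∈ Finset.range n, (r * F2 (s + 1) + W * F1 s) + r * F2 0)
          - p * ∑ t ∈ Finset.range (n + 1), F1 t) + (r * F2 (n + 1) + W * F1 n) := by
        rw [Finset.sum_congr rfl (fun s hs => hstep s (Finset.mem_range.mp hs)), h0]
    _ = r * ((∑ s ∈ Finset.range n, F2 (s + 1) + F2 0) + F2 (n + 1))
          + W * (∑ s ∈ Finset.range n, F1 s + F1 n)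
          - p * ∑ t ∈ Finset.range (n + 1), F1 t := by
        rw [Finset.sum_add_distrib, ← Finset.mul_sum, ← Finset.mul_sum]; ring
    _ = r * ∑ t ∈ Finset.range (n + 2), F2 t
          + W * ∑ t ∈ Finset.range (n + 1), F1 t
          - p * ∑ t ∈ Finset.range (n + 1), F1 t := by
        rw [← Finset.sum_range_succ' F2 n, ← Finset.sum_range_succ F1 n,
          ← Finset.sum_range_succ F2 (n + 1)]
    _ = r * ∑ t ∈ Finset.range (n + 2), F2 t
          + (W - p) * ∑ t ∈ Finset.range (n + 1), F1 t := by ring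

theorem choose_two_succ (s : ℕ) : (s + 1).choose 2 = s.choose 2 + s := by
  rw [Nat.choose_succ_succ, Nat.choose_one_right, Nat.add_comm]

theorem lemG1 {R : Type*} [CommRing R] (a b c d z : R) (n : ℕ) :
    ∑ t ∈ Finset.range (n + 2),
        PhiNM a b c d (2 * n + 2 - 2 * t) (2 * t) * z ^ t * (a * b * c * d) ^ (t.choose 2) =
      (1 + b) * ∑ t ∈ Finset.range (n + 1),
          PhiNM a b c d (2 * n + 1 - 2 * t) (2 * t) * z ^ t * (a * b * c * d) ^ (t.choose 2) +
        ((a * b * c * d) ^ n * z - b) * ∑ t ∈ Finset.range (n + 1),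
          PhiNM a b c d (2 * n - 2 * t) (2 * t) * z ^ t * (a * b * c * d) ^ (t.choose 2) := by
  apply sumLem
  · -- h0
    norm_num
    rw [PhiNM_M_zero, PhiNM_M_zero, PhiNM_M_zero]
    ring
  · -- hstep
    intro s hs
    have i1 : 2 * n + 2 - 2 * (s + 1) = 2 * (n - 1 - s) + 2 := by omega
    have i2 : 2 * n - 2 * (s + 1) = 2 * (n - 1 - s) := by omega
    have i3 : 2 * n + 1 - 2 * (s + 1) = 2 * (n - 1 - s) + 1 := by omega
    have i4 : 2 * n - 2 * s = 2 * (n - 1 - s) + 2 := by omega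
    have i5 : 2 * (s + 1) = 2 * s + 2 := by ring
    have hq : (a * b * c * d) ^ n = (a * b * c * d) ^ ((n - 1 - s) + 1 + s) := by
      congr 1; omega
    rw [i1, i2, i3, i4, i5, choose_two_succ, hq]
    linear_combination (z ^ (s + 1) * (a * b * c * d) ^ (s.choose 2 + s)) *
      recA a b c d (n - 1 - s) s
  · -- hlast
    have i1 : 2 * n + 2 - 2 * (n + 1) = 0 := by omega
    have i2 : 2 * n - 2 * n = 0 := by omega
    rw [i1, i2, PhiNM_N_zero, PhiNM_N_zero, choose_two_succ, pow_add]
    ring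

theorem lemG2 {R : Type*} [CommRing R] (a b c d z : R) (n : ℕ) :
    ∑ t ∈ Finset.range (n + 2),
        PhiNM a b c d (2 * n + 3 - 2 * t) (2 * t) * z ^ t * (a * b * c * d) ^ (t.choose 2) =
      (1 + a) * ∑ t ∈ Finset.range (n + 2),
          PhiNM a b c d (2 * n + 2 - 2 * t) (2 * t) * z ^ t * (a * b * c * d) ^ (t.choose 2) +
        (a ^ (n + 1) * b ^ n * c ^ (n + 1) * d ^ n * z - a) * ∑ t ∈ Finset.range (n + 1),
          PhiNM a b c d (2 * n + 1 - 2 * t) (2 * t) * z ^ t * (a * b * c * d) ^ (t.choose 2) := by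
  apply sumLem2
  · -- h0
    norm_num
    rw [PhiNM_M_zero, PhiNM_M_zero, PhiNM_M_zero]
    ring
  · -- hstep
    intro s hs
    have i1 : 2 * n + 3 - 2 * (s + 1) = 2 * (n - 1 - s) + 3 := by omega
    have i2 : 2 * n + 1 - 2 * (s + 1) = 2 * (n - 1 - s) + 1 := by omega
    have i3 : 2 * n + 2 - 2 * (s + 1) = 2 * (n - 1 - s) + 2 := by omega
    have i4 : 2 * n + 1 - 2 * s = 2 * (n - 1 - s) + 3 := by omega
    have i5 : 2 * (s + 1) = 2 * s + 2 := by ring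
    have e1 : a ^ (n + 1) = a ^ ((n - 1 - s) + 2 + s) := by congr 1; omega
    have e2 : b ^ n = b ^ ((n - 1 - s) + 1 + s) := by congr 1; omega
    have e3 : c ^ (n + 1) = c ^ ((n - 1 - s) + 2 + s) := by congr 1; omega
    have e4 : d ^ n = d ^ ((n - 1 - s) + 1 + s) := by congr 1; omega
    rw [i1, i2, i3, i4, i5, choose_two_succ, e1, e2, e3, e4]
    linear_combination (z ^ (s + 1) * (a * b * c * d) ^ (s.choose 2 + s)) *
      recB a b c d (n - 1 - s) s
  · -- hlast
    have i1 : 2 * n + 3 - 2 * (n + 1) = 1 := by omega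
    have i2 : 2 * n + 2 - 2 * (n + 1) = 0 := by omega
    have i3 : 2 * n + 1 - 2 * n = 1 := by omega
    have i4 : 2 * (n + 1) = 2 * n + 2 := by ring
    rw [i1, i2, i3, i4, PhiNM_N_zero, choose_two_succ]
    linear_combination (z ^ (n + 1) * (a * b * c * d) ^ (n.choose 2 + n)) * recE a b c d n

end ASaux

open ASaux

theorem tGen_recurrence {R : Type*} [CommRing R] (a b c d z q : R)
    (hq : q = a * b * c * d) (N : ℕ) (hN : 1 ≤ N) :
    TGen a b c d z (2 * N) =
        (1 + b) * TGen a b c d z (2 * N - 1) +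
          (q ^ (N - 1) * z - b) * TGen a b c d z (2 * N - 2) ∧
    TGen a b c d z (2 * N + 1) =
        (1 + a) * TGen a b c d z (2 * N) +
          (a ^ N * b ^ (N - 1) * c ^ N * d ^ (N - 1) * z - a) * TGen a b c d z (2 * N - 1) := by
  subst hq
  obtain ⟨n, rfl⟩ : ∃ n, N = n + 1 := ⟨N - 1, by omega⟩
  have g1 : 2 * (n + 1) = 2 * n + 2 := by ring
  have g2 : 2 * n + 2 - 1 = 2 * n + 1 := by omega
  have g3 : 2 * n + 2 - 2 = 2 * n := by omega
  have g4 : n + 1 - 1 = n := by omega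
  have g5 : 2 * (n + 1) + 1 = 2 * n + 3 := by omega
  have r1 : (2 * n + 2) / 2 + 1 = n + 2 := by omega
  have r2 : (2 * n + 1) / 2 + 1 = n + 1 := by omega
  have r3 : 2 * n / 2 + 1 = n + 1 := by omega
  have r4 : (2 * n + 3) / 2 + 1 = n + 2 := by omega
  constructor
  · rw [g1, g2, g3, g4, TGen, TGen, TGen, r1, r2, r3]
    exact lemG1 a b c d z n
  · rw [g5, g1, g2, g4, TGen, TGen, TGen, r4, r1, r2]
    exact lemG2 a b c d z n
end
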